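/- Let G be a connected graph (of arbitrary cardinality), (◁,◀) a compatible pair of relations between graphs, and Γ a graph containing a thick connected G-tribe F with respect to (◁,◀) which is concentrated at an end ε of Γ. Then: (1) for every finite vertex set X of Γ, the component C(X,ε) contains a thick flat G-subtribe of F; and (2) every thick G-subtribe F' of F is concentrated at ε as well. -/

import Mathlib

open SimpleGraph

/-- A ray in `Γ`: a one-way infinite path, given by its injective vertex sequence. -/
structure GRay {β : Type} (Γ : SimpleGraph β) where
  f : ℕ → β
  inj : Function.Injective f
  adj : ∀ n, Γ.Adj (f n) (f (n + 1))

/-- Two rays are equivalent (belong to the same end) iff there are infinitely many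
pairwise vertex-disjoint paths between them. -/
def RayEquiv {β : Type} (Γ : SimpleGraph β) (R S : GRay Γ) : Prop :=
  ∃ (a b : ℕ → ℕ) (P : ∀ n : ℕ, Γ.Walk (R.f (a n)) (S.f (b n))),
    (∀ n, (P n).IsPath) ∧
    ∀ m n, m ≠ n → ∀ x, x ∈ (P m).support → x ∈ (P n).support → False

/-- `x` lies on the tail `T(R, X)` of the ray `R` after `X`. -/
def InTail {β : Type} {Γ : SimpleGraph β} (R : GRay Γ) (X : Set β) (x : β) : Prop :=
  ∃ n, R.f n = x ∧ ∀ m, n ≤ m → R.f m ∉ X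

/-- The vertex `v` dominates the end represented by `ε`: there is a ray `R` in that end
together with infinitely many `v`–`R` paths, pairwise disjoint except at `v`. -/
def Dominates {β : Type} (Γ : SimpleGraph β) (ε : GRay Γ) (v : β) : Prop :=
  ∃ R : GRay Γ, RayEquiv Γ R ε ∧
    ∃ (b : ℕ → ℕ) (P : ∀ m : ℕ, Γ.Walk v (R.f (b m))),
      (∀ m, (P m).IsPath) ∧
      ∀ m m', m ≠ m' → ∀ x, x ∈ (P m).support → x ∈ (P m').support → x = v

/-- The data of a linkage from the family of rays `R` to the family `S`:
an injection `σ` and, for each `i`, a path `P i` from the vertex `x'_i = (R i).f (a i)`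
to the vertex `y_{σ i} = (S (σ i)).f (b i)`. -/
structure Linkage {β : Type} (Γ : SimpleGraph β) {n N : ℕ}
    (R : Fin n → GRay Γ) (S : Fin N → GRay Γ) where
  σ : Fin n ↪ Fin N
  a : Fin n → ℕ
  b : Fin n → ℕ
  P : ∀ i : Fin n, Γ.Walk ((R i).f (a i)) ((S (σ i)).f (b i))
  isPath : ∀ i, (P i).IsPath

/-- The vertex set of the ray `x_i R_i x'_i P_i y_{σ i} S_{σ i}` obtained by transitioning
from `R i` to `S (σ i)` along the linkage. -/
def Linkage.route {β : Type} {Γ : SimpleGraph β} {n N : ℕ}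
    {R : Fin n → GRay Γ} {S : Fin N → GRay Γ}
    (L : Linkage Γ R S) (i : Fin n) : Set β :=
  {x | ∃ m ≤ L.a i, (R i).f m = x} ∪ {x | x ∈ (L.P i).support} ∪
    {x | ∃ m, L.b i ≤ m ∧ (S (L.σ i)).f m = x}

/-- The linkage really produces a family of pairwise disjoint rays: each path meets the
initial segment of `R i` only in `x'_i` and the tail of `S (σ i)` only in `y_{σ i}`, the
initial segment and the tail are disjoint, and distinct routes are disjoint. -/
def Linkage.IsLinkage {β : Type} {Γ : SimpleGraph β} {n N : ℕ}
    {R : Fin n → GRay Γ} {S : Fin N → GRay Γ} (L : Linkage Γ R S) : Prop :=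
  (∀ i, ∀ x ∈ (L.P i).support, (∃ m ≤ L.a i, (R i).f m = x) → x = (R i).f (L.a i)) ∧
  (∀ i, ∀ x ∈ (L.P i).support, (∃ m, L.b i ≤ m ∧ (S (L.σ i)).f m = x) →
    x = (S (L.σ i)).f (L.b i)) ∧
  (∀ i, ∀ m ≤ L.a i, ∀ m', L.b i ≤ m' → (R i).f m ≠ (S (L.σ i)).f m') ∧
  (∀ i j, i ≠ j → Disjoint (L.route i) (L.route j))

/-- The linkage is after `X`. -/
def Linkage.After {β : Type} {Γ : SimpleGraph β} {n N : ℕ}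
    {R : Fin n → GRay Γ} {S : Fin N → GRay Γ}
    (L : Linkage Γ R S) (X : Set β) : Prop :=
  ∀ i, InTail (R i) X ((R i).f (L.a i)) ∧
    (∀ x ∈ (L.P i).support, x ∉ X) ∧
    (∀ m, L.b i ≤ m → (S (L.σ i)).f m ∉ X)

/-- The component `C(X, ε)` of `Γ - X` in which the end represented by `ε` lives. -/
def EndComp {β : Type} (Γ : SimpleGraph β) (ε : GRay Γ) (X : Set β) : Set β :=
  {w | w ∉ X ∧ ∃ (u : β) (p : Γ.Walk w u), (∀ z ∈ p.support, z ∉ X) ∧ InTail ε X u}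

/-- A `G`-tribe in `Γ`, with membership relation abstracted as the predicate `P`
(`P H` standing for `G ◀ H`): a collection of finite layers of pairwise disjoint
subgraphs `H` of `Γ` with `G ◀ H`. -/
structure Tribe {β : Type} (Γ : SimpleGraph β) (P : Γ.Subgraph → Prop) where
  layers : Set (Set Γ.Subgraph)
  finite : ∀ F ∈ layers, F.Finite
  prop : ∀ F ∈ layers, ∀ H ∈ F, P H
  disj : ∀ F ∈ layers, ∀ H ∈ F, ∀ H' ∈ F, H ≠ H' → Disjoint H.verts H'.verts

/-- A tribe is thick if it has layers of unbounded size. -/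
def Tribe.Thick {β : Type} {Γ : SimpleGraph β} {P : Γ.Subgraph → Prop}
    (𝓕 : Tribe Γ P) : Prop :=
  ∀ n : ℕ, ∃ F ∈ 𝓕.layers, n ≤ F.ncard

/-- `𝓕'` is a subtribe of `𝓕`. -/
def IsSubtribe {β : Type} {Γ : SimpleGraph β} {P : Γ.Subgraph → Prop}
    (𝓕' 𝓕 : Tribe Γ P) : Prop :=
  ∃ Ψ : ↥𝓕'.layers → ↥𝓕.layers, Function.Injective Ψ ∧
    ∀ L : ↥𝓕'.layers, ∃ φ : ↥L.1 → ↥(Ψ L).1,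
      Function.Injective φ ∧ ∀ H : ↥L.1, (H.1 : SimpleGraph.Subgraph Γ).verts ⊆ (φ H).1.verts

/-- `𝓕'` is a flat subtribe of `𝓕`. -/
def IsFlatSubtribe {β : Type} {Γ : SimpleGraph β} {P : Γ.Subgraph → Prop}
    (𝓕' 𝓕 : Tribe Γ P) : Prop :=
  ∃ Ψ : ↥𝓕'.layers → ↥𝓕.layers, Function.Injective Ψ ∧ ∀ L : ↥𝓕'.layers, L.1 ⊆ (Ψ L).1

/-- The disjoint union of `ι` many copies of `G`. -/
def Copies (ι : Type) {α : Type} (G : SimpleGraph α) : SimpleGraph (ι × α) where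
  Adj a b := a.1 = b.1 ∧ G.Adj a.2 b.2
  symm := ⟨by rintro a b ⟨h1, h2⟩; exact ⟨h1.symm, h2.symm⟩⟩
  loopless := ⟨by rintro a ⟨-, h⟩; exact G.ne_of_adj h rfl⟩

/-- The tribe `𝓕` is concentrated at the end represented by `ε`: for every finite
vertex set `X`, the subtribe of members not contained in `C(X, ε)` is thin,
i.e. has bounded layers. -/
def ConcentratedAt {β : Type} {Γ : SimpleGraph β} {P : Γ.Subgraph → Prop}
    (𝓕 : Tribe Γ P) (ε : GRay Γ) : Prop :=
  ∀ X : Set β, X.Finite →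
    ∃ k : ℕ, ∀ F ∈ 𝓕.layers,
      ({H ∈ F | ¬ H.verts ⊆ EndComp Γ ε X} : Set Γ.Subgraph).ncard ≤ k

/-- Let `G` be a connected graph, `(◁, ◀)` a compatible pair of relations between
graphs (`blt` = `◀` satisfying (R2)), and `Γ` a graph containing a thick connected
`G`-tribe `𝓕` concentrated at an end `ε` of `Γ`. Then:
(1) for every finite vertex set `X`, the component `C(X, ε)` contains a thick flat
subtribe of `𝓕`; and
(2) every thick subtribe `𝓕'` of `𝓕` is concentrated at `ε` as well. -/
theorem concentrated_tribe_robust {α β : Type}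
    (G : SimpleGraph α) (hG : G.Connected) (Γ : SimpleGraph β)
    (blt : ∀ {γ δ : Type}, SimpleGraph γ → SimpleGraph δ → Prop)
    (hR2 : ∀ {δ : Type} (Δ : SimpleGraph δ) (I : Type) (Hf : I → Δ.Subgraph),
      (∀ i j, i ≠ j → Disjoint (Hf i).verts (Hf j).verts) →
      (∀ i, blt G (Hf i).coe) → blt (Copies I G) (⨆ i, Hf i).coe)
    (𝓕 : Tribe Γ (fun H => blt G H.coe)) (hthick : 𝓕.Thick)
    (hconn : ∀ F ∈ 𝓕.layers, ∀ H ∈ F, (H : SimpleGraph.Subgraph Γ).coe.Connected)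
    (ε : GRay Γ) (hconc : ConcentratedAt 𝓕 ε) :
    (∀ X : Set β, X.Finite →
      ∃ 𝓕' : Tribe Γ (fun H => blt G H.coe), 𝓕'.Thick ∧ IsFlatSubtribe 𝓕' 𝓕 ∧
        ∀ F ∈ 𝓕'.layers, ∀ H ∈ F,
          (H : SimpleGraph.Subgraph Γ).verts ⊆ EndComp Γ ε X) ∧
    (∀ 𝓕' : Tribe Γ (fun H => blt G H.coe),
      IsSubtribe 𝓕' 𝓕 → 𝓕'.Thick → ConcentratedAt 𝓕' ε) := by

  constructor
  · -- Part (1)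
    intro X hX
    obtain ⟨k, hk⟩ := hconc X hX
    classical
    refine ⟨⟨{F' | ∃ F ∈ 𝓕.layers, F' = {H ∈ F | H.verts ⊆ EndComp Γ ε X}}, ?_, ?_, ?_⟩,
        ?_, ?_, ?_⟩
    · rintro F' ⟨F, hF, rfl⟩
      exact (𝓕.finite F hF).subset (fun H hH => hH.1)
    · rintro F' ⟨F, hF, rfl⟩ H hH
      exact 𝓕.prop F hF H hH.1
    · rintro F' ⟨F, hF, rfl⟩ H hH H' hH' hne
      exact 𝓕.disj F hF H hH.1 H' hH'.1 hne
    · -- thick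
      intro n
      obtain ⟨F, hF, hcard⟩ := hthick (n + k)
      refine ⟨{H ∈ F | H.verts ⊆ EndComp Γ ε X}, ⟨F, hF, rfl⟩, ?_⟩
      have hFfin := 𝓕.finite F hF
      have hunion : F = {H ∈ F | H.verts ⊆ EndComp Γ ε X} ∪
          {H ∈ F | ¬ H.verts ⊆ EndComp Γ ε X} := by
        ext H
        by_cases h : H.verts ⊆ EndComp Γ ε X <;> simp [h]
      have hdisj : Disjoint {H ∈ F | H.verts ⊆ EndComp Γ ε X}
          {H ∈ F | ¬ H.verts ⊆ EndComp Γ ε X} := by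
        rw [Set.disjoint_left]
        rintro H ⟨-, h1⟩ ⟨-, h2⟩
        exact h2 h1
      have h1fin : ({H ∈ F | H.verts ⊆ EndComp Γ ε X} : Set Γ.Subgraph).Finite :=
        hFfin.subset (fun H hH => hH.1)
      have h2fin : ({H ∈ F | ¬ H.verts ⊆ EndComp Γ ε X} : Set Γ.Subgraph).Finite :=
        hFfin.subset (fun H hH => hH.1)
      have hsum : F.ncard = ({H ∈ F | H.verts ⊆ EndComp Γ ε X} : Set Γ.Subgraph).ncard +
          ({H ∈ F | ¬ H.verts ⊆ EndComp Γ ε X} : Set Γ.Subgraph).ncard := by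
        conv_lhs => rw [hunion]
        exact Set.ncard_union_eq hdisj h1fin h2fin
      have := hk F hF
      omega
    · -- flat subtribe
      refine ⟨fun L => ⟨L.2.choose, L.2.choose_spec.1⟩, ?_, ?_⟩
      · intro L L' h
        have h1 := L.2.choose_spec.2
        have h2 := L'.2.choose_spec.2
        have h3 : L.2.choose = L'.2.choose := congrArg Subtype.val h
        apply Subtype.ext
        rw [h1, h2, h3]
      · intro L
        have h1 := L.2.choose_spec.2
        intro H hH
        rw [h1] at hH
        exact hH.1
    · rintro F' ⟨F, hF, rfl⟩ H hH
      exact hH.2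
  · -- Part (2)
    rintro 𝓕' ⟨Ψ, hΨinj, hφ⟩ hthick' X hX
    obtain ⟨k, hk⟩ := hconc X hX
    classical
    refine ⟨k, ?_⟩
    intro F' hF'
    obtain ⟨φ, hφinj, hφsub⟩ := hφ ⟨F', hF'⟩
    have hΨmem := (Ψ ⟨F', hF'⟩).2
    have hSk : ({H ∈ (Ψ ⟨F', hF'⟩).1 | ¬ H.verts ⊆ EndComp Γ ε X} : Set Γ.Subgraph).ncard
        ≤ k := hk _ hΨmem
    have hSfin : ({H ∈ (Ψ ⟨F', hF'⟩).1 | ¬ H.verts ⊆ EndComp Γ ε X} :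
        Set Γ.Subgraph).Finite :=
      (𝓕.finite _ hΨmem).subset (fun H hH => hH.1)
    refine le_trans (Set.ncard_le_ncard_of_injOn
      (fun H => if h : H ∈ F' then (φ ⟨H, h⟩).1 else H) ?_ ?_ hSfin) hSk
    · rintro H ⟨hHF, hHC⟩
      simp only [dif_pos hHF]
      refine ⟨(φ ⟨H, hHF⟩).2, ?_⟩
      intro hsub
      exact hHC (fun x hx => hsub (hφsub ⟨H, hHF⟩ hx))
    · rintro H1 ⟨h1, -⟩ H2 ⟨h2, -⟩ heq
      simp only [dif_pos h1, dif_pos h2] at heq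
      have := hφinj (Subtype.ext heq)
      exact congrArg Subtype.val this
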